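/- arXiv:1903.05735 — 5 statements merged into one kernel-verified Lean document; each statement's English description precedes it below -/
import Mathlib

section
/- For every odd 2-adic integer s and every positive integer l, the Fibonacci polynomial values satisfy F_{3·2^l}(s) ≡ 0 (mod 2^{l+2}) and F_{3·2^l+1}(s) ≡ 1 + 2^{l+1} (mod 2^{l+2}). -/
open Polynomial

noncomputable def fibPoly : ℕ → Polynomial ℤ
  | 0 => 0
  | 1 => 1
  | n + 2 => X * fibPoly (n + 1) + fibPoly n

/-!
By the doubling formulas `F₂ₙ = Fₙ (2 Fₙ₊₁ - x Fₙ)` and `F₂ₙ₊₁ = Fₙ₊₁² + Fₙ²`, the congruences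
`Fₙ(s) ≡ 0` and `Fₙ₊₁(s) ≡ 1 + 2^(l+1) (mod 2^(l+2))` for `n = 3·2^l` pass from `l` to `l + 1`:
`Fₙ(s)` gains a factor `2` from `2 Fₙ₊₁ - s Fₙ`, and squaring `1 + 2^(l+1) + 2^(l+2) q` gives
`1 + 2^(l+2)` modulo `2^(l+3)` as soon as `l ≥ 1`. The base case `l = 1` reduces, via
`s² ≡ 1 (mod 8)` for odd `s`, to `F₆(s) ≡ 0` and `F₇(s) ≡ 5 (mod 8)`.
-/

theorem fibPoly_add_two (n : ℕ) : fibPoly (n + 2) = X * fibPoly (n + 1) + fibPoly n := rfl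

theorem fibPoly_add_add_one (m n : ℕ) :
    fibPoly (m + n + 1) = fibPoly (m + 1) * fibPoly (n + 1) + fibPoly m * fibPoly n := by
  induction n generalizing m with
  | zero => simp [fibPoly]
  | succ n ih =>
    rw [show m + (n + 1) + 1 = (m + 1) + n + 1 by ring, ih (m + 1), fibPoly_add_two m,
      fibPoly_add_two n]
    ring

theorem fibPoly_two_mul_add_one (n : ℕ) :
    fibPoly (2 * n + 1) = fibPoly (n + 1) ^ 2 + fibPoly n ^ 2 := by
  rw [two_mul, fibPoly_add_add_one]
  ring

theorem fibPoly_two_mul (n : ℕ) :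
    fibPoly (2 * n) = fibPoly n * (2 * fibPoly (n + 1) - X * fibPoly n) := by
  cases n with
  | zero => simp [fibPoly]
  | succ m =>
    rw [show 2 * (m + 1) = (m + 1) + m + 1 by ring, fibPoly_add_add_one, fibPoly_add_two m]
    ring

theorem fibPoly_six : fibPoly 6 = X ^ 5 + 4 * X ^ 3 + 3 * X := by
  simp only [fibPoly]
  ring

theorem fibPoly_seven : fibPoly 7 = X ^ 6 + 5 * X ^ 4 + 6 * X ^ 2 + 1 := by
  simp only [fibPoly]
  ring

theorem Int.sq_modEq_one_add_two_pow {b : ℤ} {k : ℕ} (hk : 2 ≤ k)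
    (hb : b ≡ 1 + 2 ^ k [ZMOD 2 ^ (k + 1)]) : b ^ 2 ≡ 1 + 2 ^ (k + 1) [ZMOD 2 ^ (k + 2)] := by
  obtain ⟨q, hq⟩ := Int.modEq_iff_dvd.mp hb.symm
  obtain ⟨j, rfl⟩ := Nat.exists_eq_add_of_le hk
  refine Int.modEq_iff_dvd.mpr ⟨-q - 2 ^ j * (1 + 2 * q) ^ 2, ?_⟩
  rw [show b = 1 + 2 ^ (2 + j) + 2 ^ (2 + j + 1) * q by linear_combination hq]
  ring

theorem fibPoly_eval_double_modEq {s : ℤ} {n l : ℕ} (hl : 1 ≤ l)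
    (ha : (fibPoly n).eval s ≡ 0 [ZMOD 2 ^ (l + 2)])
    (hb : (fibPoly (n + 1)).eval s ≡ 1 + 2 ^ (l + 1) [ZMOD 2 ^ (l + 2)]) :
    (fibPoly (2 * n)).eval s ≡ 0 [ZMOD 2 ^ (l + 3)] ∧
    (fibPoly (2 * n + 1)).eval s ≡ 1 + 2 ^ (l + 2) [ZMOD 2 ^ (l + 3)] := by
  set a := (fibPoly n).eval s
  set b := (fibPoly (n + 1)).eval s
  replace ha : 2 ^ (l + 2) ∣ a := Int.modEq_zero_iff_dvd.mp ha
  have h2a : 2 ∣ a := (dvd_pow_self 2 (by omega)).trans ha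
  constructor
  · rw [fibPoly_two_mul, eval_mul, eval_sub, eval_mul, eval_mul, eval_X, eval_ofNat]
    refine Int.modEq_zero_iff_dvd.mpr ?_
    rw [pow_succ]
    exact mul_dvd_mul ha (dvd_sub (dvd_mul_right 2 b) (h2a.mul_left s))
  · rw [fibPoly_two_mul_add_one, eval_add, eval_pow, eval_pow]
    have ha2 : a ^ 2 ≡ 0 [ZMOD 2 ^ (l + 3)] := by
      have h : (2 : ℤ) ^ (l + 3) ∣ (2 ^ (l + 2)) ^ 2 := by
        rw [← pow_mul]
        exact pow_dvd_pow 2 (by omega)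
      exact Int.modEq_zero_iff_dvd.mpr (h.trans (pow_dvd_pow_of_dvd ha 2))
    simpa using (Int.sq_modEq_one_add_two_pow (by omega) hb).add ha2

theorem Int.sq_modEq_one_of_odd {s : ℤ} (hs : Odd s) : s ^ 2 ≡ 1 [ZMOD 8] :=
  (Int.modEq_iff_dvd.mpr (Int.eight_dvd_sq_sub_one_of_odd hs)).symm

theorem fibPoly_six_eval_modEq_zero {s : ℤ} (hs : Odd s) : (fibPoly 6).eval s ≡ 0 [ZMOD 8] := by
  have hs2 := Int.sq_modEq_one_of_odd hs
  calc (fibPoly 6).eval s = s * ((s ^ 2) ^ 2 + 4 * s ^ 2 + 3) := by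
        simp only [fibPoly_six, eval_add, eval_mul, eval_pow, eval_X, eval_ofNat]
        ring
    _ ≡ s * (1 ^ 2 + 4 * 1 + 3) [ZMOD 8] := by gcongr
    _ = 8 * s := by ring
    _ ≡ 0 [ZMOD 8] := Int.modEq_zero_iff_dvd.mpr (dvd_mul_right 8 s)

theorem fibPoly_seven_eval_modEq_five {s : ℤ} (hs : Odd s) :
    (fibPoly 7).eval s ≡ 5 [ZMOD 8] := by
  have hs2 := Int.sq_modEq_one_of_odd hs
  calc (fibPoly 7).eval s = (s ^ 2) ^ 3 + 5 * (s ^ 2) ^ 2 + 6 * s ^ 2 + 1 := by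
        simp only [fibPoly_seven, eval_add, eval_mul, eval_pow, eval_X, eval_ofNat, eval_one]
        ring
    _ ≡ 1 ^ 3 + 5 * 1 ^ 2 + 6 * 1 + 1 [ZMOD 8] := by gcongr
    _ ≡ 5 [ZMOD 8] := by decide

theorem fibPoly_eval_odd_mod (s : ℤ) (hs : Odd s) (l : ℕ) (hl : 1 ≤ l) :
    (fibPoly (3 * 2 ^ l)).eval s ≡ 0 [ZMOD (2 : ℤ) ^ (l + 2)] ∧
    (fibPoly (3 * 2 ^ l + 1)).eval s ≡ 1 + 2 ^ (l + 1) [ZMOD (2 : ℤ) ^ (l + 2)] := by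
  induction l, hl using Nat.le_induction with
  | base => exact ⟨fibPoly_six_eval_modEq_zero hs, fibPoly_seven_eval_modEq_five hs⟩
  | succ l hl ih =>
    rw [show 3 * 2 ^ (l + 1) = 2 * (3 * 2 ^ l) by ring]
    exact fibPoly_eval_double_modEq hl ih.1 ih.2
end

section
/- For every odd integer s and every positive integer l, the sequence m ↦ F_m(s) (mod 2^l) is periodic with (exact) period 3·2^{l-1}, i.e., F_{m+3·2^{l-1}}(s) ≡ F_m(s) (mod 2^l) for all m ≥ 0, and no smaller positive period works. -/
/-!
With `M = !![s, 1; 1, 0]` one has `M ^ n = !![F_{n+1}, F_n; F_n, F_{n-1}]`, so `p` is a period of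
`F_m(s)` modulo `2 ^ l` exactly when `M ^ p = 1` over `ZMod (2 ^ l)`: the minimal period is the
order of `M` there. Modulo 2 this order is 3. For odd `s`, `M ^ 3` is `1` modulo 2 but not
modulo 4, and `M ^ 6 = 1 + 4 (1 + 2 Z)`; from then on every squaring raises the exact power of 2
in `M ^ (3 * 2 ^ k) - 1` by one, so the order modulo `2 ^ l` is `3 * 2 ^ (l - 1)`.
-/

open Polynomial

section CommRing

variable {R S : Type*} [CommRing R] [CommRing S]

theorem intCast_eval_eq_aeval (p : ℤ[X]) (s : ℤ) :
    ((p.eval s : ℤ) : R) = aeval (s : R) p := by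
  rw [← eval_map_algebraMap, algebraMap_int_eq, eval_intCast_map, eq_intCast]
  simp

def fibMatrix (x : R) : Matrix (Fin 2) (Fin 2) R := !![x, 1; 1, 0]

theorem aeval_fibPoly_add_two (x : R) (n : ℕ) :
    aeval x (fibPoly (n + 2)) = x * aeval x (fibPoly (n + 1)) + aeval x (fibPoly n) := by
  simp [fibPoly]

/-- The bottom-right entry is `F_{n-1}(x)`, written so that it is also right for `n = 0`. -/
theorem fibMatrix_pow (x : R) (n : ℕ) :
    fibMatrix x ^ n = !![aeval x (fibPoly (n + 1)), aeval x (fibPoly n);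
      aeval x (fibPoly n), aeval x (fibPoly (n + 1)) - x * aeval x (fibPoly n)] := by
  induction n with
  | zero => simp [fibPoly, Matrix.one_fin_two]
  | succ n ih =>
    rw [pow_succ, ih, fibMatrix, Matrix.mul_fin_two, aeval_fibPoly_add_two]
    ext i j
    fin_cases i <;> fin_cases j <;> simp <;> ring

theorem fibMatrix_pow_apply_zero_one (x : R) (n : ℕ) :
    (fibMatrix x ^ n) 0 1 = aeval x (fibPoly n) := by
  simp [fibMatrix_pow]

theorem fibMatrix_pow_eq_one_iff (x : R) (p : ℕ) :
    fibMatrix x ^ p = 1 ↔ ∀ m, aeval x (fibPoly (m + p)) = aeval x (fibPoly m) := by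
  refine ⟨fun h m => ?_, fun h => ?_⟩
  · rw [← fibMatrix_pow_apply_zero_one, pow_add, h, mul_one, fibMatrix_pow_apply_zero_one]
  · have h0 := h 0
    have h1 := h 1
    simp only [zero_add, add_comm 1 p, fibPoly, map_zero, map_one] at h0 h1
    rw [fibMatrix_pow, h0, h1, Matrix.one_fin_two]
    simp

theorem fibMatrix_pow_three (x : R) :
    fibMatrix x ^ 3 = !![x ^ 3 + 2 * x, x ^ 2 + 1; x ^ 2 + 1, x] := by
  ext i j
  fin_cases i <;> fin_cases j <;> simp [fibMatrix_pow, fibPoly] <;> ring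

/-- Cayley–Hamilton for `fibMatrix x ^ 3`, whose trace is `x ^ 3 + 3 * x` and determinant `-1`. -/
theorem fibMatrix_pow_six (x : R) :
    fibMatrix x ^ 6 = 1 + (x ^ 3 + 3 * x) • fibMatrix x ^ 3 := by
  rw [show 6 = 3 + 3 from rfl, pow_add, fibMatrix_pow_three, Matrix.mul_fin_two]
  ext i j
  fin_cases i <;> fin_cases j <;> simp <;> ring

theorem fibMatrix_map (f : R →+* S) (x : R) : (fibMatrix x).map f = fibMatrix (f x) := by
  ext i j
  fin_cases i <;> fin_cases j <;> simp [fibMatrix]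

theorem orderOf_fibMatrix_one_zmod_two : orderOf (fibMatrix (1 : ZMod 2)) = 3 := by
  have : Fact (Nat.Prime 3) := ⟨Nat.prime_three⟩
  exact orderOf_eq_prime (by unfold fibMatrix; decide) (by unfold fibMatrix; decide)

theorem three_dvd_orderOf_fibMatrix (f : R →+* ZMod 2) {x : R} (hx : f x = 1) :
    3 ∣ orderOf (fibMatrix x) := by
  have h := orderOf_map_dvd f.mapMatrix.toMonoidHom (fibMatrix x)
  rwa [RingHom.toMonoidHom_eq_coe, MonoidHom.coe_coe, RingHom.mapMatrix_apply, fibMatrix_map, hx,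
    orderOf_fibMatrix_one_zmod_two] at h

end CommRing

/-- Lifting the exponent at 2: the term `2 ^ (2 * n)` of the square is divisible by `2 ^ (n + 2)`
as soon as `n ≥ 2`. -/
theorem exists_one_add_two_pow_smul_pow_two_pow {R : Type*} [Ring R] {n : ℕ} (hn : 2 ≤ n)
    (Z : R) (k : ℕ) :
    ∃ Z' : R, (1 + 2 ^ n • (1 + 2 • Z)) ^ 2 ^ k = 1 + 2 ^ (n + k) • (1 + 2 • Z') := by
  induction k with
  | zero => exact ⟨Z, by simp⟩
  | succ k ih =>
    obtain ⟨Z', hZ'⟩ := ih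
    obtain ⟨t, ht⟩ := Nat.exists_eq_add_of_le' (hn.trans (Nat.le_add_right n k))
    refine ⟨Z' + 2 ^ t • (1 + 2 • Z') ^ 2, ?_⟩
    rw [pow_succ, pow_mul, hZ', (Commute.one_left _).add_sq, _root_.smul_pow, one_pow, mul_one,
      two_mul, ← add_assoc n k 1, ht]
    module

theorem fibMatrix_pow_three_of_odd {s : ℤ} (hs : Odd s) :
    ∃ B : Matrix (Fin 2) (Fin 2) ℤ, fibMatrix s ^ 3 = 1 + 2 • B ∧ Odd (B 0 1) := by
  obtain ⟨j, rfl⟩ := hs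
  refine ⟨!![4 * j ^ 3 + 6 * j ^ 2 + 5 * j + 1, 2 * j ^ 2 + 2 * j + 1;
    2 * j ^ 2 + 2 * j + 1, j], ?_, ⟨j ^ 2 + j, show 2 * j ^ 2 + 2 * j + 1 = _ by ring⟩⟩
  rw [fibMatrix_pow_three]
  ext i j
  fin_cases i <;> fin_cases j <;> simp <;> ring

theorem fibMatrix_pow_six_of_odd {s : ℤ} (hs : Odd s) :
    ∃ Z : Matrix (Fin 2) (Fin 2) ℤ, fibMatrix s ^ 6 = 1 + 2 ^ 2 • (1 + 2 • Z) := by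
  obtain ⟨B, hB, -⟩ := fibMatrix_pow_three_of_odd hs
  obtain ⟨j, rfl⟩ := hs
  obtain ⟨m, hm⟩ := Int.even_mul_succ_self j
  have hc : (2 * j + 1) ^ 3 + 3 * (2 * j + 1) = 4 * (1 + 2 * (2 * j * m + j + m)) := by
    linear_combination 4 * (2 * j + 1) * hm
  refine ⟨(2 * j * m + j + m) • 1 + B + (2 * (2 * j * m + j + m)) • B, ?_⟩
  rw [fibMatrix_pow_six, hB, hc]
  module

theorem exists_fibMatrix_pow_three_mul_two_pow {s : ℤ} (hs : Odd s) (k : ℕ) :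
    ∃ Y : Matrix (Fin 2) (Fin 2) ℤ, fibMatrix s ^ (3 * 2 ^ k) = 1 + 2 ^ (k + 1) • Y ∧
      ∃ i j, Odd (Y i j) := by
  cases k with
  | zero =>
    obtain ⟨B, hB, hodd⟩ := fibMatrix_pow_three_of_odd hs
    exact ⟨B, by simpa using hB, 0, 1, hodd⟩
  | succ k =>
    obtain ⟨Z, hZ⟩ := fibMatrix_pow_six_of_odd hs
    obtain ⟨Z', hZ'⟩ := exists_one_add_two_pow_smul_pow_two_pow le_rfl Z k
    refine ⟨1 + 2 • Z', ?_, 0, 0, ⟨Z' 0 0, ?_⟩⟩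
    · rw [show 3 * 2 ^ (k + 1) = 6 * 2 ^ k by ring, pow_mul, hZ, hZ', add_comm 2 k]
    · rw [Matrix.add_apply, Matrix.one_apply_eq, Matrix.smul_apply, nsmul_eq_mul]
      push_cast
      ring

theorem map_one_add_smul_eq_one_iff {ι : Type*} [Fintype ι] [DecidableEq ι] (N c : ℕ)
    (Y : Matrix ι ι ℤ) :
    (1 + c • Y).map (Int.cast : ℤ → ZMod N) = 1 ↔ ∀ i j, (N : ℤ) ∣ c * Y i j := by
  rw [Matrix.map_add _ Int.cast_add, Matrix.map_one _ Int.cast_zero Int.cast_one, add_eq_left,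
    ← Matrix.ext_iff]
  simp only [Matrix.map_apply, Matrix.smul_apply, Matrix.zero_apply]
  simp only [nsmul_eq_mul, ZMod.intCast_zmod_eq_zero_iff_dvd]

theorem eq_three_mul_two_pow_of_dvd {d k : ℕ} (h3 : 3 ∣ d) (hd : d ∣ 3 * 2 ^ (k + 1))
    (hk : ¬ d ∣ 3 * 2 ^ k) : d = 3 * 2 ^ (k + 1) := by
  obtain ⟨e, rfl⟩ := h3
  have he : e ∣ 2 ^ (k + 1) := Nat.dvd_of_mul_dvd_mul_left (by norm_num) hd
  rw [Nat.eq_prime_pow_of_dvd_least_prime_pow Nat.prime_two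
    (fun h => hk (mul_dvd_mul_left 3 h)) he]

theorem orderOf_fibMatrix_intCast_zmod_two_pow {s : ℤ} (hs : Odd s) (n : ℕ) :
    orderOf (fibMatrix (s : ZMod (2 ^ (n + 1)))) = 3 * 2 ^ n := by
  have hmap (k : ℕ) : fibMatrix (s : ZMod (2 ^ (n + 1))) ^ k =
      (fibMatrix s ^ k).map (Int.cast : ℤ → ZMod (2 ^ (n + 1))) := by
    rw [← eq_intCast (Int.castRingHom _), ← fibMatrix_map]
    exact (map_pow (Int.castRingHom _).mapMatrix _ _).symm
  have h3 : 3 ∣ orderOf (fibMatrix (s : ZMod (2 ^ (n + 1)))) :=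
    three_dvd_orderOf_fibMatrix (ZMod.castHom (dvd_pow_self 2 n.succ_ne_zero) (ZMod 2))
      (by simpa using hs.intCast_zmod_two)
  have hd : orderOf (fibMatrix (s : ZMod (2 ^ (n + 1)))) ∣ 3 * 2 ^ n := by
    obtain ⟨Y, hY, -⟩ := exists_fibMatrix_pow_three_mul_two_pow hs n
    rw [orderOf_dvd_iff_pow_eq_one, hmap, hY, map_one_add_smul_eq_one_iff]
    exact fun i j => by push_cast; exact dvd_mul_right _ _
  cases n with
  | zero => simpa using Nat.dvd_antisymm hd h3
  | succ n =>
    refine eq_three_mul_two_pow_of_dvd h3 hd fun h => ?_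
    obtain ⟨Y, hY, i, j, hodd⟩ := exists_fibMatrix_pow_three_mul_two_pow hs n
    rw [orderOf_dvd_iff_pow_eq_one, hmap, hY, map_one_add_smul_eq_one_iff] at h
    have h2 : (2 : ℤ) ∣ Y i j := by
      have := h i j
      push_cast at this
      rwa [pow_succ, mul_dvd_mul_iff_left (by positivity)] at this
    exact Int.not_even_iff_odd.2 hodd (even_iff_two_dvd.2 h2)

theorem fibPoly_eval_odd_periodic (s : ℤ) (hs : Odd s) (l : ℕ) (hl : 1 ≤ l) :
    (∀ m : ℕ, (fibPoly (m + 3 * 2 ^ (l - 1))).eval s ≡ (fibPoly m).eval s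
        [ZMOD (2 : ℤ) ^ l]) ∧
    (∀ p : ℕ, 0 < p →
      (∀ m : ℕ, (fibPoly (m + p)).eval s ≡ (fibPoly m).eval s [ZMOD (2 : ℤ) ^ l]) →
      3 * 2 ^ (l - 1) ≤ p) := by
  obtain ⟨n, rfl⟩ := Nat.exists_eq_add_of_le' hl
  have hperiod (p : ℕ) : (∀ m : ℕ, (fibPoly (m + p)).eval s ≡ (fibPoly m).eval s
      [ZMOD (2 : ℤ) ^ (n + 1)]) ↔ 3 * 2 ^ n ∣ p := by
    rw [← orderOf_fibMatrix_intCast_zmod_two_pow hs n, orderOf_dvd_iff_pow_eq_one,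
      fibMatrix_pow_eq_one_iff]
    have hN : ((2 ^ (n + 1) : ℕ) : ℤ) = 2 ^ (n + 1) := by push_cast; rfl
    simp only [← intCast_eval_eq_aeval, ZMod.intCast_eq_intCast_iff, hN]
  simp only [Nat.add_sub_cancel]
  exact ⟨(hperiod _).2 dvd_rfl, fun p hp h => Nat.le_of_dvd hp ((hperiod p).1 h)⟩
end

section
/- For any two odd integers s₁ and s₂, the sequence m ↦ F'_m(s₁)·F'_m(s₂) (mod 4) is periodic of period 6, with values (starting from m = 0): 0, 0, 1, 0, 1, 0. -/
open Polynomial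

/-!
Modulo 4, `F'_m(s)` only depends on `s mod 4`, and for odd `s` this residue `t` satisfies
`t ^ 2 = 1` in `ZMod 4`. The pair `(F_m(t), F'_m(t))` obeys a second-order recurrence over the
finite ring `ZMod 4`; for `t = 1, 3` it returns to its initial values after 12 steps, so it is
12-periodic, and the claim reduces to a finite computation over one period.
-/

/-- `(F_m(t), F'_m(t))`, given by the recurrence so that `decide` can evaluate it. -/
def fibPair {R : Type*} [CommRing R] (t : R) : ℕ → R × R
  | 0 => (0, 0)
  | 1 => (1, 0)
  | n + 2 => (t * (fibPair t (n + 1)).1 + (fibPair t n).1,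
      (fibPair t (n + 1)).1 + t * (fibPair t (n + 1)).2 + (fibPair t n).2)

theorem Function.Periodic.of_add_two_eq {α : Type*} {u : ℕ → α} (g : α → α → α)
    (hu : ∀ n, u (n + 2) = g (u n) (u (n + 1))) {p : ℕ} (h₀ : u p = u 0)
    (h₁ : u (p + 1) = u 1) : Function.Periodic u p
  | 0 => by simpa using h₀
  | 1 => by simpa [add_comm] using h₁
  | n + 2 => by
    rw [show n + 2 + p = n + p + 2 by omega, hu, hu, Function.Periodic.of_add_two_eq g hu h₀ h₁ n,
      show n + p + 1 = n + 1 + p by omega, Function.Periodic.of_add_two_eq g hu h₀ h₁ (n + 1)]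

theorem fibPair_intCast {R : Type*} [CommRing R] (s : ℤ) :
    ∀ m, fibPair (s : R) m =
      ((((fibPoly m).eval s : ℤ) : R), (((derivative (fibPoly m)).eval s : ℤ) : R))
  | 0 => by simp [fibPair, fibPoly]
  | 1 => by simp [fibPair, fibPoly]
  | m + 2 => by
    rw [fibPair, fibPair_intCast s m, fibPair_intCast s (m + 1)]
    simp only [fibPoly, derivative_add, derivative_mul, derivative_X, one_mul, eval_add, eval_mul,
      eval_X, Int.cast_add, Int.cast_mul]

theorem fibPair_periodic {t : ZMod 4} (ht : t ^ 2 = 1) : Function.Periodic (fibPair t) 12 :=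
  Function.Periodic.of_add_two_eq (fun a b => (t * b.1 + a.1, b.1 + t * b.2 + a.2))
    (fun _ => rfl) (by revert t; decide) (by revert t; decide)

theorem fibPair_snd_mul_fibPair_snd {t₁ t₂ : ZMod 4} (h₁ : t₁ ^ 2 = 1) (h₂ : t₂ ^ 2 = 1) (m : ℕ) :
    (fibPair t₁ m).2 * (fibPair t₂ m).2 = if m % 6 = 2 ∨ m % 6 = 4 then 1 else 0 := by
  have hmod : m % 6 = m % 12 % 6 := (Nat.mod_mod_of_dvd m (by norm_num)).symm
  rw [← (fibPair_periodic h₁).map_mod_nat, ← (fibPair_periodic h₂).map_mod_nat, hmod]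
  have hr : m % 12 < 12 := Nat.mod_lt _ (by norm_num)
  generalize m % 12 = r at hr
  revert t₁ t₂ r
  decide

theorem intCast_sq_zmod_four_of_odd {s : ℤ} (hs : Odd s) : (s : ZMod 4) ^ 2 = 1 := by
  rw [← Int.cast_pow, ← ZMod.intCast_mod, Nat.cast_ofNat, Int.sq_mod_four_eq_one_of_odd hs,
    Int.cast_one]

theorem fibPoly_deriv_product_mod_four (s₁ s₂ : ℤ) (h₁ : Odd s₁) (h₂ : Odd s₂) :
    (∀ m : ℕ, (derivative (fibPoly (m + 6))).eval s₁ * (derivative (fibPoly (m + 6))).eval s₂ ≡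
      (derivative (fibPoly m)).eval s₁ * (derivative (fibPoly m)).eval s₂ [ZMOD (4 : ℤ)]) ∧
    (derivative (fibPoly 0)).eval s₁ * (derivative (fibPoly 0)).eval s₂ ≡ 0 [ZMOD (4 : ℤ)] ∧
    (derivative (fibPoly 1)).eval s₁ * (derivative (fibPoly 1)).eval s₂ ≡ 0 [ZMOD (4 : ℤ)] ∧
    (derivative (fibPoly 2)).eval s₁ * (derivative (fibPoly 2)).eval s₂ ≡ 1 [ZMOD (4 : ℤ)] ∧
    (derivative (fibPoly 3)).eval s₁ * (derivative (fibPoly 3)).eval s₂ ≡ 0 [ZMOD (4 : ℤ)] ∧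
    (derivative (fibPoly 4)).eval s₁ * (derivative (fibPoly 4)).eval s₂ ≡ 1 [ZMOD (4 : ℤ)] ∧
    (derivative (fibPoly 5)).eval s₁ * (derivative (fibPoly 5)).eval s₂ ≡ 0 [ZMOD (4 : ℤ)] := by
  have hprod (m : ℕ) :
      (((derivative (fibPoly m)).eval s₁ * (derivative (fibPoly m)).eval s₂ : ℤ) : ZMod 4) =
        if m % 6 = 2 ∨ m % 6 = 4 then 1 else 0 := by
    rw [← fibPair_snd_mul_fibPair_snd (intCast_sq_zmod_four_of_odd h₁)
      (intCast_sq_zmod_four_of_odd h₂), fibPair_intCast, fibPair_intCast, Int.cast_mul]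
  refine ⟨fun m => ?_, ?_, ?_, ?_, ?_, ?_, ?_⟩
  · exact (ZMod.intCast_eq_intCast_iff _ _ 4).1 (by rw [hprod, hprod, Nat.add_mod_right])
  all_goals exact (ZMod.intCast_eq_intCast_iff _ _ 4).1 (by rw [hprod]; decide)
end

section
/- Let q be an odd nonnegative integer with binary expansion q = Σ c_i 2^i, and let t = min{ i ≥ 0 : c_i = c_{i+1} }. Then t is odd if and only if c_t = c_{t+1} = 0. -/
theorem Nat.testBit_eq_decide_even_of_alternating {q t : ℕ} (h0 : q.testBit 0 = true)
    (halt : ∀ i < t, q.testBit i ≠ q.testBit (i + 1)) :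
    ∀ i ≤ t, q.testBit i = decide (Even i) := by
  intro i hi
  induction i with
  | zero => simpa using h0
  | succ n ih =>
    have hflip : q.testBit (n + 1) = !q.testBit n :=
      Bool.eq_not_of_ne (halt n (by omega)).symm
    rw [hflip, ih (by omega)]
    simp [Nat.even_add_one, ← Nat.not_odd_iff_even]

theorem odd_t_iff_digits_zero (q t : ℕ) (hq : Odd q)
    (ht : q.testBit t = q.testBit (t + 1))
    (hmin : ∀ i < t, q.testBit i ≠ q.testBit (i + 1)) :
    Odd t ↔ (q.testBit t = false ∧ q.testBit (t + 1) = false) := by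
  have h0 : q.testBit 0 = true := by simp [Nat.testBit_zero, Nat.odd_iff.mp hq]
  rw [← ht, Nat.testBit_eq_decide_even_of_alternating h0 hmin t le_rfl]
  simp
end

section
/- Let m = 6 + 12q with q = 4d for some nonnegative integer d. Then for every n ≥ 1 and k ∈ {0, 1}: F_m((1+4k)·2^n) ≡ (3+4k)·2^n and F_m((3+4k)·2^n) ≡ (1+4k)·2^n (mod 2^{n+3}); moreover F'_m((1+4k)·2^n)·F'_m((3+4k)·2^n) ≡ 1 (mod 4) and ν₂( F_m²((1+4k)·2^n) − (1+4k)·2^n ) = n + 3, where F_m² denotes the second iterate of F_m. -/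
/-!
Write `m = 6 + 12 q = 2 h` with `h = 3 + 24 d`. The coefficient formula for Fibonacci polynomials
gives `F_m ≡ h X + C(h+1, 3) X³ (mod X⁵)`, and `4 ∣ C(h+1, 3)` because `h` is odd. Hence for
`2ⁿ ∣ x`, `n ≥ 1`, we get `F_m(x) ≡ h x (mod 2ⁿ⁺⁴)` and `F_m'(x) ≡ h (mod 4)`: modulo `2ⁿ⁺⁴`,
`F_m` acts on such `x` as multiplication by `h ≡ 3 (mod 8)`, and `F_m ∘ F_m` as multiplication
by `h²`, where `h² - 1 = 8 (1 + 6d)(1 + 12d)` has 2-adic valuation exactly 3.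
-/

open Polynomial

theorem coeff_fibPoly (n i : ℕ) :
    (fibPoly n).coeff i = if Odd (n + i) then (((n + i) / 2).choose i : ℤ) else 0 := by
  simp only [Nat.odd_iff]
  induction n using Nat.twoStepInduction generalizing i with
  | zero =>
    split_ifs
    · rw [Nat.choose_eq_zero_of_lt (by omega)]; rfl
    · rfl
  | one =>
    rcases i with _ | j
    · simp [fibPoly]
    · split_ifs
      · rw [Nat.choose_eq_zero_of_lt (by omega)]; simp [fibPoly, coeff_one]
      · simp [fibPoly, coeff_one]
  | more n ih₀ ih₁ =>
    rw [fibPoly, coeff_add]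
    rcases i with _ | j
    · simp only [coeff_X_mul_zero, ih₀, zero_add, Nat.choose_zero_right]
      exact if_congr (by omega) rfl rfl
    · rw [coeff_X_mul, ih₀, ih₁]
      rcases Nat.even_or_odd' (n + j) with ⟨t, ht | ht⟩
      · rw [if_pos (by omega), if_pos (by omega), if_pos (by omega),
          show (n + 1 + j) / 2 = t by omega, show (n + (j + 1)) / 2 = t by omega,
          show (n + 2 + (j + 1)) / 2 = t + 1 by omega, Nat.choose_succ_succ]
        push_cast; ring
      · rw [if_neg (by omega), if_neg (by omega), if_neg (by omega), add_zero]

theorem X_pow_five_dvd_fibPoly_two_mul_sub (h : ℕ) :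
    X ^ 5 ∣ fibPoly (2 * h) - (C (h : ℤ) * X + C ((h + 1).choose 3 : ℤ) * X ^ 3) := by
  rw [X_pow_dvd_iff]
  intro i hi
  simp only [coeff_sub, coeff_add, coeff_C_mul, coeff_X, coeff_X_pow, coeff_fibPoly, Nat.odd_iff]
  interval_cases i
  · simp
  · rw [if_pos (by omega), show (2 * h + 1) / 2 = h by omega]; simp
  · rw [if_neg (by omega)]; simp
  · rw [if_pos (by omega), show (2 * h + 3) / 2 = h + 1 by omega]; simp
  · rw [if_neg (by omega)]; simp

theorem four_dvd_succ_choose_three_of_odd {h : ℕ} (hh : Odd h) : 4 ∣ (h + 1).choose 3 := by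
  obtain ⟨t, rfl⟩ := hh
  obtain ⟨s, hs⟩ := Nat.even_mul_succ_self t
  have h6 : 6 * (2 * t + 1 + 1).choose 3 = 4 * (2 * t + 1) * (t * (t + 1)) := by
    rw [show 6 = Nat.factorial 3 from rfl, ← Nat.descFactorial_eq_factorial_mul_choose]
    simp only [Nat.descFactorial_succ, Nat.reduceSubDiff, add_tsub_cancel_right, tsub_zero,
      Nat.descFactorial_zero, mul_one]
    ring
  have h8 : 6 * (2 * t + 1 + 1).choose 3 = 8 * (s * (2 * t + 1)) := by rw [h6, hs]; ring
  omega

theorem padicValInt_eq_of_modEq_prime_pow {p : ℕ} [hp : Fact p.Prime] {y : ℤ} {N : ℕ}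
    (h : y ≡ (p : ℤ) ^ N [ZMOD (p : ℤ) ^ (N + 1)]) : padicValInt p y = N := by
  have hpZ : Prime (p : ℤ) := Nat.prime_iff_prime_int.mp hp.out
  have hlt : ¬ (p : ℤ) ^ (N + 1) ∣ (p : ℤ) ^ N := by
    rw [pow_dvd_pow_iff hpZ.ne_zero hpZ.not_isUnit]; omega
  have hdiff := Int.modEq_iff_dvd.mp h
  have hN : (p : ℤ) ^ N ∣ y := by
    simpa using dvd_sub (dvd_refl _) ((pow_dvd_pow _ N.le_succ).trans hdiff)
  have hN1 : ¬ (p : ℤ) ^ (N + 1) ∣ y := fun hy => hlt (by simpa using dvd_add hdiff hy)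
  rw [padicValInt_dvd_iff, not_or] at hN1
  rw [padicValInt_dvd_iff] at hN
  omega

theorem eval_modEq_of_X_pow_five_dvd {f : ℤ[X]} {a b x : ℤ} {n : ℕ}
    (hf : X ^ 5 ∣ f - (C a * X + C b * X ^ 3)) (hb : 4 ∣ b) (hn : 1 ≤ n) (hx : 2 ^ n ∣ x) :
    f.eval x ≡ a * x [ZMOD 2 ^ (n + 4)] := by
  obtain ⟨g, hg⟩ := hf
  have hfx : f.eval x - a * x = b * x ^ 3 + x ^ 5 * g.eval x := by
    have := congrArg (eval x) hg
    simp only [eval_sub, eval_add, eval_mul, eval_C, eval_X, eval_pow] at this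
    linear_combination this
  refine (Int.modEq_iff_dvd.mpr ?_).symm
  rw [hfx]
  refine dvd_add ?_ (Dvd.dvd.mul_right ?_ _)
  · calc (2 : ℤ) ^ (n + 4) ∣ 2 ^ 2 * (2 ^ n) ^ 3 := by
          rw [← pow_mul, ← pow_add]; exact pow_dvd_pow 2 (by omega)
      _ ∣ b * x ^ 3 := mul_dvd_mul (by simpa using hb) (pow_dvd_pow_of_dvd hx 3)
  · calc (2 : ℤ) ^ (n + 4) ∣ (2 ^ n) ^ 5 := by
          rw [← pow_mul]; exact pow_dvd_pow 2 (by omega)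
      _ ∣ x ^ 5 := pow_dvd_pow_of_dvd hx 5

theorem derivative_eval_modEq_of_X_pow_three_dvd {f : ℤ[X]} {a x : ℤ}
    (hf : X ^ 3 ∣ f - C a * X) (hx : 2 ∣ x) : (derivative f).eval x ≡ a [ZMOD 4] := by
  have h2 : X ^ 2 ∣ derivative f - C a := by
    simpa using pow_sub_one_dvd_derivative_of_pow_dvd hf
  have hx2 : x ^ 2 ∣ (derivative f).eval x - a := by
    simpa using map_dvd (evalRingHom x) h2
  exact (Int.modEq_iff_dvd.mpr ((pow_dvd_pow_of_dvd hx 2).trans hx2)).symm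

theorem fibPoly_m_six_mod_twelve_q_four_d (q d : ℕ) (hq : q = 4 * d) :
    ∀ n : ℕ, 1 ≤ n → ∀ k : ℕ, k ≤ 1 →
      (fibPoly (6 + 12 * q)).eval ((1 + 4 * (k : ℤ)) * 2 ^ n) ≡
        (3 + 4 * (k : ℤ)) * 2 ^ n [ZMOD (2 : ℤ) ^ (n + 3)] ∧
      (fibPoly (6 + 12 * q)).eval ((3 + 4 * (k : ℤ)) * 2 ^ n) ≡
        (1 + 4 * (k : ℤ)) * 2 ^ n [ZMOD (2 : ℤ) ^ (n + 3)] ∧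
      (derivative (fibPoly (6 + 12 * q))).eval ((1 + 4 * (k : ℤ)) * 2 ^ n) *
        (derivative (fibPoly (6 + 12 * q))).eval ((3 + 4 * (k : ℤ)) * 2 ^ n) ≡ 1
        [ZMOD (4 : ℤ)] ∧
      padicValInt 2
        ((fibPoly (6 + 12 * q)).eval ((fibPoly (6 + 12 * q)).eval
            ((1 + 4 * (k : ℤ)) * 2 ^ n)) -
          (1 + 4 * (k : ℤ)) * 2 ^ n) = n + 3 := by
  intro n hn k _
  set a : ℤ := 3 + 24 * d
  set b : ℤ := (((3 + 24 * d + 1).choose 3 : ℕ) : ℤ)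
  set F := fibPoly (6 + 12 * q)
  have hF : X ^ 5 ∣ F - (C a * X + C b * X ^ 3) := by
    have := X_pow_five_dvd_fibPoly_two_mul_sub (3 + 24 * d)
    rwa [show 2 * (3 + 24 * d) = 6 + 12 * q by omega, Nat.cast_add, Nat.cast_mul] at this
  have hb : 4 ∣ b :=
    Int.natCast_dvd_natCast.mpr (four_dvd_succ_choose_three_of_odd ⟨1 + 12 * d, by ring⟩)
  have hF3 : X ^ 3 ∣ F - C a * X := by
    rw [show F - C a * X = (F - (C a * X + C b * X ^ 3)) + X ^ 3 * C b by ring]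
    exact dvd_add ((pow_dvd_pow X (by norm_num)).trans hF) (dvd_mul_right _ _)
  have hval : ∀ {x : ℤ}, 2 ^ n ∣ x → F.eval x ≡ a * x [ZMOD 2 ^ (n + 4)] :=
    eval_modEq_of_X_pow_five_dvd hF hb hn
  have hderiv : ∀ c : ℤ, (derivative F).eval (c * 2 ^ n) ≡ a [ZMOD 4] := fun c =>
    derivative_eval_modEq_of_X_pow_three_dvd hF3 ((dvd_pow_self 2 (by omega)).mul_left c)
  have h8 : (2 : ℤ) ^ (n + 3) ∣ 2 ^ (n + 4) := pow_dvd_pow 2 (by omega)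
  set x := (1 + 4 * (k : ℤ)) * 2 ^ n
  have hFx : F.eval x ≡ a * x [ZMOD 2 ^ (n + 4)] := hval (dvd_mul_left _ _)
  refine ⟨?_, ?_, ?_, ?_⟩
  · refine (hFx.of_dvd h8).trans (Int.modEq_iff_dvd.mpr ⟨-(3 * d + k + 12 * d * k), ?_⟩)
    ring
  · refine ((hval (dvd_mul_left _ _)).of_dvd h8).trans
      (Int.modEq_iff_dvd.mpr ⟨-(1 + 9 * d + k + 12 * d * k), ?_⟩)
    ring
  · refine ((hderiv _).mul (hderiv _)).trans
      (Int.modEq_iff_dvd.mpr ⟨-(2 + 36 * d + 144 * d ^ 2), ?_⟩)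
    ring
  -- `a ^ 2 - 1 = 8 * (1 + 6 * d) * (1 + 12 * d)` has 2-adic valuation exactly 3.
  · have hdvd : 2 ^ n ∣ F.eval x :=
      ((hFx.of_dvd (pow_dvd_pow 2 (by omega))).dvd_iff).mpr ((dvd_mul_left _ _).mul_left a)
    have hFFx : F.eval (F.eval x) - x ≡ 2 ^ (n + 3) [ZMOD 2 ^ (n + 4)] :=
      (((hval hdvd).trans (hFx.mul_left a)).sub_right x).trans (Int.modEq_iff_dvd.mpr
        ⟨-(9 * d + 36 * d ^ 2 + 2 * k + 36 * d * k + 144 * d ^ 2 * k), by ring⟩)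
    exact_mod_cast padicValInt_eq_of_modEq_prime_pow (p := 2) (by exact_mod_cast hFFx)
end
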